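/- arXiv:2605.07438 — 7 statements merged into one kernel-verified Lean document; each statement's English description precedes it below -/
import Mathlib

section
/- The lattice of implicative filters of a Hilbert algebra, ordered by inclusion, is a distributive lattice (with meet given by intersection). -/
structure HilbertAlgebra (A : Type*) where
  imp : A → A → A
  one : A
  one_eq : ∀ a : A, imp a a = one
  K : ∀ a b : A, imp a (imp b a) = one
  S : ∀ a b c : A, imp (imp a (imp b c)) (imp (imp a b) (imp a c)) = one
  antisymm : ∀ a b : A, imp a b = one → imp b a = one → a = b

namespace HilbertAlgebra

variable {A : Type*} (H : HilbertAlgebra A)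

/-- The order of a Hilbert algebra: `a ≤ b` iff `a → b = 1`. -/
def le (a b : A) : Prop := H.imp a b = H.one

/-- Implicative filters: contain `1` and are closed under modus ponens. -/
def IsFilter (F : Set A) : Prop :=
  H.one ∈ F ∧ ∀ a b : A, a ∈ F → H.imp a b ∈ F → b ∈ F

/-- The implicative filter generated by a set `X`. -/
def Fg (X : Set A) : Set A := ⋂₀ {F : Set A | H.IsFilter F ∧ X ⊆ F}

/-- Meet irreducible implicative filters. -/
def MeetIrred (F : Set A) : Prop :=
  H.IsFilter F ∧ F ≠ Set.univ ∧
    ∀ G K : Set A, H.IsFilter G → H.IsFilter K → F ⊂ G → F ⊂ K → F ≠ G ∩ K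

/-- The terms `dₙ`. -/
def d : (n : ℕ) → (Fin (n + 1) → A) → A
  | 0, x => x 0
  | n + 1, x =>
    H.imp
      (H.imp (H.imp (x (Fin.last (n + 1))) (d n fun i => x i.castSucc))
        (x (Fin.last (n + 1))))
      (x (Fin.last (n + 1)))

end HilbertAlgebra

/-!
An element `a` of `F ∩ Fg (G ∪ K)` has a derivation `x₁ → (x₂ → ⋯ → (xₙ → a)) = 1` with
every `xᵢ ∈ G ∪ K`. Replacing each `xᵢ` by `(xᵢ → a) → a` still yields a derivation of `a`,
and now each hypothesis lies above `a`, hence in `F`, and above `xᵢ`, hence in `G` or `K`.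
So `a` is derivable from `(F ∩ G) ∪ (F ∩ K)`.
-/

namespace HilbertAlgebra

variable {A : Type*} (H : HilbertAlgebra A)

local infixr:60 " ⇒ " => H.imp
local infix:50 " ≼ " => H.le

section Arithmetic

variable {a b c p q : A}

theorem le_refl (a : A) : a ≼ a := H.one_eq a

theorem imp_one (a : A) : a ⇒ H.one = H.one := by
  simpa only [H.one_eq] using H.K a a

theorem eq_one_of_le (ha : a = H.one) (hab : a ≼ b) : b = H.one := by
  subst ha
  exact (H.antisymm _ _ hab (H.imp_one b)).symm

theorem le_of_eq_one (hb : b = H.one) (a : A) : a ≼ b :=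
  H.eq_one_of_le hb (H.K b a)

theorem imp_le_imp_of_le_imp (h : a ≼ b ⇒ c) : a ⇒ b ≼ a ⇒ c :=
  H.eq_one_of_le h (H.S a b c)

theorem imp_le_imp_left (h : p ≼ q) (a : A) : a ⇒ p ≼ a ⇒ q :=
  H.imp_le_imp_of_le_imp (H.le_of_eq_one h a)

theorem le_trans (hab : a ≼ b) (hbc : b ≼ c) : a ≼ c :=
  H.eq_one_of_le hab (H.imp_le_imp_left hbc a)

theorem le_imp_swap (h : a ≼ b ⇒ c) : b ≼ a ⇒ c :=
  H.le_trans (H.K b a) (H.imp_le_imp_of_le_imp h)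

theorem le_imp_imp (a b : A) : a ≼ (a ⇒ b) ⇒ b :=
  H.le_imp_swap (H.le_refl (a ⇒ b))

theorem imp_le_imp_right (h : p ≼ q) (c : A) : q ⇒ c ≼ p ⇒ c :=
  H.le_imp_swap (H.le_trans h (H.le_imp_imp q c))

theorem imp_left_comm_le (a b c : A) : a ⇒ b ⇒ c ≼ b ⇒ a ⇒ c :=
  H.le_trans (H.S a b c) (H.imp_le_imp_right (H.K b a) (a ⇒ c))

end Arithmetic

def impChain (l : List A) (a : A) : A := l.foldr H.imp a

section Chains

variable {l : List A} {a b p q : A}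

@[simp]
theorem impChain_cons (x : A) (l : List A) (a : A) :
    H.impChain (x :: l) a = x ⇒ H.impChain l a := rfl

theorem impChain_append (l m : List A) (a : A) :
    H.impChain (l ++ m) a = H.impChain l (H.impChain m a) :=
  List.foldr_append

theorem impChain_one (l : List A) : H.impChain l H.one = H.one := by
  induction l with
  | nil => rfl
  | cons x l ih => rw [impChain_cons, ih, imp_one]

theorem impChain_mono (h : p ≼ q) (l : List A) : H.impChain l p ≼ H.impChain l q := by
  induction l with
  | nil => exact h
  | cons x l ih => exact H.imp_le_imp_left ih x

theorem le_impChain (l : List A) (a : A) : a ≼ H.impChain l a := by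
  induction l with
  | nil => exact H.le_refl a
  | cons x l ih => exact H.le_trans ih (H.K _ x)

theorem impChain_imp_le (l : List A) (a b : A) :
    H.impChain l (a ⇒ b) ≼ H.impChain l a ⇒ H.impChain l b := by
  induction l with
  | nil => exact H.le_refl _
  | cons x l ih => exact H.le_trans (H.imp_le_imp_left ih x) (H.S x _ _)

theorem impChain_eq_one_of_imp (ha : H.impChain l a = H.one)
    (hab : H.impChain l (a ⇒ b) = H.one) : H.impChain l b = H.one :=
  H.eq_one_of_le ha (H.eq_one_of_le hab (H.impChain_imp_le l a b))

theorem imp_impChain_le_imp_imp_imp_impChain (x : A) (m : List A) (a : A) :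
    x ⇒ H.impChain m a ≼ ((x ⇒ a) ⇒ a) ⇒ H.impChain m a := by
  induction m with
  | nil => exact H.le_imp_imp (x ⇒ a) a
  | cons c m ih =>
    refine H.le_trans (H.imp_left_comm_le x c _) (H.le_trans ?_ (H.imp_left_comm_le c _ _))
    exact H.imp_le_imp_left ih c

theorem impChain_le_impChain_map (l : List A) (a : A) :
    H.impChain l a ≼ H.impChain (l.map fun x => (x ⇒ a) ⇒ a) a := by
  induction l with
  | nil => exact H.le_refl a
  | cons x l ih =>
    exact H.le_trans (H.imp_le_imp_left ih x) (H.imp_impChain_le_imp_imp_imp_impChain x _ a)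

end Chains

section Filters

variable {F X Y : Set A} {a b : A}

variable {H} in
theorem IsFilter.mem_of_le (hF : H.IsFilter F) (ha : a ∈ F) (hab : a ≼ b) : b ∈ F :=
  hF.2 a b ha (hab ▸ hF.1)

variable {H} in
theorem IsFilter.mem_of_impChain_mem (hF : H.IsFilter F) {l : List A} (hl : ∀ x ∈ l, x ∈ F)
    (h : H.impChain l a ∈ F) : a ∈ F := by
  induction l with
  | nil => exact h
  | cons x l ih =>
    exact ih (fun y hy => hl y (List.mem_cons_of_mem x hy)) (hF.2 x _ (hl x List.mem_cons_self) h)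

theorem isFilter_Fg (X : Set A) : H.IsFilter (H.Fg X) :=
  ⟨fun _ hM => hM.1.1, fun a b ha hab M hM => hM.1.2 a b (ha M hM) (hab M hM)⟩

theorem subset_Fg (X : Set A) : X ⊆ H.Fg X :=
  fun _ hx _ hM => hM.2 hx

theorem Fg_subset (hF : H.IsFilter F) (hX : X ⊆ F) : H.Fg X ⊆ F :=
  Set.sInter_subset_of_mem ⟨hF, hX⟩

theorem Fg_mono (hXY : X ⊆ Y) : H.Fg X ⊆ H.Fg Y :=
  H.Fg_subset (H.isFilter_Fg Y) (hXY.trans (H.subset_Fg Y))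

def Derivable (X : Set A) : Set A :=
  {a | ∃ l : List A, (∀ x ∈ l, x ∈ X) ∧ H.impChain l a = H.one}

theorem derivable_mono (hXY : X ⊆ Y) : H.Derivable X ⊆ H.Derivable Y :=
  fun _ ⟨l, hl, h⟩ => ⟨l, fun x hx => hXY (hl x hx), h⟩

theorem isFilter_derivable (X : Set A) : H.IsFilter (H.Derivable X) := by
  refine ⟨⟨[], by simp, rfl⟩, ?_⟩
  rintro a b ⟨l, hl, hla⟩ ⟨m, hm, hmab⟩
  refine ⟨m ++ l, fun x hx => (List.mem_append.1 hx).elim (hm x) (hl x), ?_⟩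
  have ha : H.impChain (m ++ l) a = H.one := by
    rw [impChain_append, hla, impChain_one]
  have hab : H.impChain (m ++ l) (a ⇒ b) = H.one := by
    rw [impChain_append]
    exact H.eq_one_of_le hmab (H.impChain_mono (H.le_impChain l _) m)
  exact H.impChain_eq_one_of_imp ha hab

theorem Fg_eq_derivable (X : Set A) : H.Fg X = H.Derivable X := by
  have hX : X ⊆ H.Derivable X := fun x hx => ⟨[x], by simpa using hx, H.one_eq x⟩
  refine (H.Fg_subset (H.isFilter_derivable X) hX).antisymm ?_
  rintro a ⟨l, hl, h⟩
  refine (H.isFilter_Fg X).mem_of_impChain_mem (fun x hx => H.subset_Fg X (hl x hx)) ?_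
  rw [h]
  exact (H.isFilter_Fg X).1

theorem derivable_inter_upperClosure (hF : H.IsFilter F) (haF : a ∈ F)
    (haX : a ∈ H.Derivable X) : a ∈ H.Derivable (F ∩ {y | ∃ x ∈ X, x ≼ y}) := by
  obtain ⟨l, hl, h⟩ := haX
  refine ⟨l.map fun x => (x ⇒ a) ⇒ a, ?_, H.eq_one_of_le h (H.impChain_le_impChain_map l a)⟩
  simp only [List.mem_map]
  rintro _ ⟨x, hx, rfl⟩
  exact ⟨hF.mem_of_le haF (H.K a _), x, hl x hx, H.le_imp_imp x a⟩

end Filters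

end HilbertAlgebra

open HilbertAlgebra Set in
/-- The lattice of implicative filters (meet = intersection, join = generated
filter of the union) is distributive. -/
theorem hilbert_filters_distributive {A : Type*} (H : HilbertAlgebra A)
    (F G K : Set A) (hF : H.IsFilter F) (hG : H.IsFilter G) (hK : H.IsFilter K) :
    F ∩ H.Fg (G ∪ K) = H.Fg ((F ∩ G) ∪ (F ∩ K)) := by
  refine Subset.antisymm ?_ ?_
  · rintro a ⟨haF, haGK⟩
    rw [Fg_eq_derivable] at haGK ⊢
    refine H.derivable_mono ?_ (H.derivable_inter_upperClosure hF haF haGK)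
    rintro y ⟨hyF, x, hx | hx, hxy⟩
    exacts [Or.inl ⟨hyF, hG.mem_of_le hx hxy⟩, Or.inr ⟨hyF, hK.mem_of_le hx hxy⟩]
  · exact subset_inter (H.Fg_subset hF (union_subset inter_subset_left inter_subset_left))
      (H.Fg_mono (union_subset_union inter_subset_right inter_subset_right))
end

section
/- Let A be a Hilbert algebra, F an implicative filter, and a ∈ A with a ∉ F. Then there exists a meet irreducible implicative filter G of A such that F ⊆ G and a ∉ G. -/
/-- Separation: if `a ∉ F` for an implicative filter `F`, then there is a meet
irreducible implicative filter `G ⊇ F` with `a ∉ G`. -/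
theorem hilbert_separation {A : Type*} (H : HilbertAlgebra A) (F : Set A) (a : A)
    (hF : H.IsFilter F) (ha : a ∉ F) :
    ∃ G : Set A, H.MeetIrred G ∧ F ⊆ G ∧ a ∉ G := by
  set S : Set (Set A) := {G | H.IsFilter G ∧ F ⊆ G ∧ a ∉ G} with hS
  have hch : ∀ c ⊆ S, IsChain (· ⊆ ·) c → c.Nonempty → ∃ ub ∈ S, ∀ s ∈ c, s ⊆ ub := by
    rintro c hcS hchain ⟨x, hxc⟩
    refine ⟨⋃₀ c, ⟨⟨Set.mem_sUnion.2 ⟨x, hxc, (hcS hxc).1.1⟩, ?_⟩, ?_, ?_⟩,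
      fun s hs => Set.subset_sUnion_of_mem hs⟩
    · rintro p q ⟨s, hsc, hps⟩ ⟨t, htc, hqt⟩
      rcases hchain.total hsc htc with hst | hts
      · exact ⟨t, htc, (hcS htc).1.2 p q (hst hps) hqt⟩
      · exact ⟨s, hsc, (hcS hsc).1.2 p q hps (hts hqt)⟩
    · exact (hcS hxc).2.1.trans (Set.subset_sUnion_of_mem hxc)
    · rintro ⟨s, hsc, has⟩; exact (hcS hsc).2.2 has
  obtain ⟨G, hFG, hGS, hGmax⟩ := zorn_subset_nonempty S hch F ⟨hF, subset_rfl, ha⟩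
  obtain ⟨hGfil, hFsub, haG⟩ := hGS
  refine ⟨G, ⟨hGfil, ?_, ?_⟩, hFsub, haG⟩
  · intro h; exact haG (h ▸ Set.mem_univ a)
  · intro G₁ G₂ h₁ h₂ hs₁ hs₂ heq
    have key : ∀ K : Set A, H.IsFilter K → G ⊂ K → a ∈ K := by
      intro K hK hGK
      by_contra haK
      exact hGK.not_subset (hGmax ⟨hK, hFsub.trans hGK.subset, haK⟩ hGK.subset)
    rw [heq] at haG
    exact haG ⟨key G₁ h₁ hs₁, key G₂ h₂ hs₂⟩
end

section
/- Let A be a Hilbert algebra and a, b ∈ A with a ≰ b (i.e., a → b ≠ 1). Then there exists a meet irreducible implicative filter F of A with a ∈ F and b ∉ F. -/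
/-- If `a ≰ b`, there is a meet irreducible implicative filter containing `a`
but not `b`. -/
theorem hilbert_separation_elements {A : Type*} (H : HilbertAlgebra A) (a b : A)
    (hab : H.imp a b ≠ H.one) :
    ∃ F : Set A, H.MeetIrred F ∧ a ∈ F ∧ b ∉ F := by
  classical
  have le_one : ∀ x : A, H.imp x H.one = H.one := by
    intro x
    conv_lhs => rw [← H.one_eq x]
    exact H.K x x
  have one_le : ∀ q : A, H.imp H.one q = H.one → q = H.one := fun q hq =>
    H.antisymm q H.one (le_one q) hq
  have mp_eq : ∀ p q : A, H.imp p q = H.one → p = H.one → q = H.one := by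
    intro p q h hp; rw [hp] at h; exact one_le q h
  -- the principal filter of a
  set F0 : Set A := {x | H.imp a x = H.one} with hF0
  have hF0filter : H.IsFilter F0 := by
    constructor
    · exact le_one a
    · intro x y hx hxy
      have s := H.S a x y
      have s2 := mp_eq _ _ s hxy
      exact mp_eq _ _ s2 hx
  have hF0S : F0 ∈ {F : Set A | H.IsFilter F ∧ a ∈ F ∧ b ∉ F} :=
    ⟨hF0filter, H.one_eq a, hab⟩
  have hchaincond : ∀ c ⊆ {F : Set A | H.IsFilter F ∧ a ∈ F ∧ b ∉ F},
      IsChain (· ⊆ ·) c → c.Nonempty →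
      ∃ ub ∈ {F : Set A | H.IsFilter F ∧ a ∈ F ∧ b ∉ F}, ∀ s ∈ c, s ⊆ ub := by
    rintro c hcS hchain ⟨F1, hF1⟩
    refine ⟨⋃₀ c, ⟨⟨?_, ?_⟩, ?_, ?_⟩, fun s hs => Set.subset_sUnion_of_mem hs⟩
    · exact ⟨F1, hF1, (hcS hF1).1.1⟩
    · rintro x y ⟨G1, hG1, hx⟩ ⟨G2, hG2, hxy⟩
      rcases hchain.total hG1 hG2 with h12 | h21
      · exact ⟨G2, hG2, (hcS hG2).1.2 x y (h12 hx) hxy⟩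
      · exact ⟨G1, hG1, (hcS hG1).1.2 x y hx (h21 hxy)⟩
    · exact ⟨F1, hF1, (hcS hF1).2.1⟩
    · rintro ⟨G, hG, hb⟩; exact (hcS hG).2.2 hb
  obtain ⟨F, -, hFS, hFmax⟩ := zorn_subset_nonempty
    {F : Set A | H.IsFilter F ∧ a ∈ F ∧ b ∉ F} hchaincond F0 hF0S
  obtain ⟨hFfilter, haF, hbF⟩ := hFS
  refine ⟨F, ⟨hFfilter, ?_, ?_⟩, haF, hbF⟩
  · intro h; exact hbF (h ▸ Set.mem_univ b)
  · intro G K hG hK hFG hFK hEq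
    have hbG : b ∈ G := by
      by_contra hbG
      exact hFG.2 (hFmax ⟨hG, hFG.1 haF, hbG⟩ hFG.1)
    have hbK : b ∈ K := by
      by_contra hbK
      exact hFK.2 (hFmax ⟨hK, hFK.1 haF, hbK⟩ hFK.1)
    exact hbF (hEq ▸ ⟨hbG, hbK⟩)
end

section
/- Let A be a Hilbert algebra and a ∈ A. The set G = { b ∈ A : a ≤ b and b → a = a } is an implicative filter of A. -/
section Aux

variable {A : Type*} (H : HilbertAlgebra A)

lemma imp_one (x : A) : H.imp x H.one = H.one := by
  have := H.K x x
  rwa [H.one_eq x] at this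

lemma one_of_one_imp {x : A} (h : H.imp H.one x = H.one) : x = H.one :=
  (H.antisymm H.one x h (imp_one H x)).symm

lemma mp {x y : A} (hxy : H.imp x y = H.one) (hx : x = H.one) : y = H.one := by
  subst hx; exact one_of_one_imp H hxy

lemma htrans {x y z : A} (h1 : H.imp x y = H.one) (h2 : H.imp y z = H.one) :
    H.imp x z = H.one := by
  have s := H.S x y z
  have h3 : H.imp x (H.imp y z) = H.one := by rw [h2]; exact imp_one H x
  exact mp H (mp H s h3) h1

lemma imp_imp_self (x y : A) : H.imp x (H.imp (H.imp x y) y) = H.one := by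
  have s := H.S (H.imp x y) x y
  rw [H.one_eq (H.imp x y)] at s
  have h := one_of_one_imp H s
  exact htrans H (H.K x (H.imp x y)) h

lemma one_imp (x : A) : H.imp H.one x = x := by
  refine (H.antisymm x (H.imp H.one x) (H.K x H.one) ?_).symm
  exact one_of_one_imp H (imp_imp_self H H.one x)

lemma bcomb (x y z : A) :
    H.imp (H.imp y z) (H.imp (H.imp x y) (H.imp x z)) = H.one :=
  htrans H (H.K (H.imp y z) x) (H.S x y z)

end Aux

/-- The set `G = { b : a ≤ b and b → a = a }` is an implicative filter. -/
theorem hilbert_G_isFilter {A : Type*} (H : HilbertAlgebra A) (a : A) :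
    H.IsFilter {b : A | H.le a b ∧ H.imp b a = a} := by
  constructor
  · exact ⟨imp_one H a, one_imp H a⟩
  · rintro b c ⟨hab, hba⟩ ⟨habc, hbca⟩
    have hac : H.le a c := by
      have s := H.S a b c
      exact mp H (mp H s habc) hab
    refine ⟨hac, ?_⟩
    have h1 : H.imp (H.imp c a) a = H.one := by
      have := bcomb H b c a
      rwa [hba, hbca] at this
    exact (H.antisymm a (H.imp c a) (H.K a c) h1).symm
end

section
/- Let A be a Hilbert algebra, F₀ a meet prime implicative filter, F₁ an implicative filter with F₀ ⊊ F₁, and a ∈ A with a ∉ F₁. Then F₁ ∩ G ⊄ F₀, where G = { b : a ≤ b and b → a = a }. -/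
namespace HilbertAlgebra

variable {A : Type*} (H : HilbertAlgebra A)

/-- "Provable" elements: equal to `1`. -/
def Pv (x : A) : Prop := x = H.one

theorem pv_imp_one (y : A) : H.imp y H.one = H.one := by
  have h := H.K y y
  rwa [H.one_eq y] at h

theorem pv_mp {x y : A} (hxy : H.Pv (H.imp x y)) (hx : H.Pv x) : H.Pv y := by
  unfold Pv at *
  rw [hx] at hxy
  exact H.antisymm y H.one (H.pv_imp_one y) hxy

theorem pv_k (x y : A) : H.Pv (H.imp x (H.imp y x)) := H.K x y

theorem pv_s (x y z : A) :
    H.Pv (H.imp (H.imp x (H.imp y z)) (H.imp (H.imp x y) (H.imp x z))) := H.S x y z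

theorem pv_i (x : A) : H.Pv (H.imp x x) := H.one_eq x

theorem thmC (c a x : A) : H.Pv (H.imp c (H.imp (H.imp c x) (H.imp (H.imp (H.imp c a) x) x))) :=
  (H.pv_mp (H.pv_mp (H.pv_s c (H.imp (H.imp c x) x) (H.imp (H.imp c x) (H.imp (H.imp (H.imp c a) x) x))) (H.pv_mp (H.pv_k (H.imp (H.imp (H.imp c x) x) (H.imp (H.imp c x) (H.imp (H.imp (H.imp c a) x) x))) c) (H.pv_mp (H.pv_s (H.imp c x) x (H.imp (H.imp (H.imp c a) x) x)) (H.pv_mp (H.pv_k (H.imp x (H.imp (H.imp (H.imp c a) x) x)) (H.imp c x)) (H.pv_k x (H.imp (H.imp c a) x)))))) (H.pv_mp (H.pv_mp (H.pv_s c (H.imp (H.imp c x) c) (H.imp (H.imp c x) x)) (H.pv_mp (H.pv_k (H.imp (H.imp (H.imp c x) c) (H.imp (H.imp c x) x)) c) (H.pv_mp (H.pv_s (H.imp c x) c x) (H.pv_i (H.imp c x))))) (H.pv_k c (H.imp c x))))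

theorem thmA (c a x : A) : H.Pv (H.imp a (H.imp (H.imp c x) (H.imp (H.imp (H.imp c a) x) x))) :=
  (H.pv_mp (H.pv_mp (H.pv_s a (H.imp (H.imp (H.imp c a) x) x) (H.imp (H.imp c x) (H.imp (H.imp (H.imp c a) x) x))) (H.pv_mp (H.pv_k (H.imp (H.imp (H.imp (H.imp c a) x) x) (H.imp (H.imp c x) (H.imp (H.imp (H.imp c a) x) x))) a) (H.pv_k (H.imp (H.imp (H.imp c a) x) x) (H.imp c x)))) (H.pv_mp (H.pv_mp (H.pv_s a (H.imp (H.imp (H.imp c a) x) (H.imp c a)) (H.imp (H.imp (H.imp c a) x) x)) (H.pv_mp (H.pv_k (H.imp (H.imp (H.imp (H.imp c a) x) (H.imp c a)) (H.imp (H.imp (H.imp c a) x) x)) a) (H.pv_mp (H.pv_s (H.imp (H.imp c a) x) (H.imp c a) x) (H.pv_i (H.imp (H.imp c a) x))))) (H.pv_mp (H.pv_mp (H.pv_s a (H.imp c a) (H.imp (H.imp (H.imp c a) x) (H.imp c a))) (H.pv_mp (H.pv_k (H.imp (H.imp c a) (H.imp (H.imp (H.imp c a) x) (H.imp c a))) a)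 (H.pv_k (H.imp c a) (H.imp (H.imp c a) x)))) (H.pv_k a c))))

theorem thmB (c a x : A) : H.Pv (H.imp (H.imp (H.imp (H.imp c x) (H.imp (H.imp (H.imp c a) x) x)) a) a) :=
  (H.pv_mp (H.pv_mp (H.pv_s (H.imp (H.imp (H.imp c x) (H.imp (H.imp (H.imp c a) x) x)) a) (H.imp (H.imp c x) (H.imp (H.imp (H.imp c a) x) x)) a) (H.pv_i (H.imp (H.imp (H.imp c x) (H.imp (H.imp (H.imp c a) x) x)) a))) (H.pv_mp (H.pv_mp (H.pv_s (H.imp (H.imp (H.imp c x) (H.imp (H.imp (H.imp c a) x) x)) a) (H.imp (H.imp (H.imp c a) x) x) (H.imp (H.imp c x) (H.imp (H.imp (H.imp c a) x) x))) (H.pv_mp (H.pv_k (H.imp (H.imp (H.imp (H.imp c a) x) x) (H.imp (H.imp c x) (H.imp (H.imp (H.imp c a) x) x))) (H.imp (H.imp (H.imp c x) (H.imp (H.imp (H.imp c a) x) x)) a)) (H.pv_k (H.imp (H.imp (H.imp c a) x) x) (H.imp c x)))) (H.pv_mp (H.pv_mp (H.pv_s (H.imp (H.imp (H.imp c x) (H.imp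 (H.imp (H.imp c a) x) x)) a) (H.imp (H.imp (H.imp c a) x) (H.imp c a)) (H.imp (H.imp (H.imp c a) x) x)) (H.pv_mp (H.pv_k (H.imp (H.imp (H.imp (H.imp c a) x) (H.imp c a)) (H.imp (H.imp (H.imp c a) x) x)) (H.imp (H.imp (H.imp c x) (H.imp (H.imp (H.imp c a) x) x)) a)) (H.pv_mp (H.pv_s (H.imp (H.imp c a) x) (H.imp c a) x) (H.pv_i (H.imp (H.imp c a) x))))) (H.pv_mp (H.pv_mp (H.pv_s (H.imp (H.imp (H.imp c x) (H.imp (H.imp (H.imp c a) x) x)) a) (H.imp c a) (H.imp (H.imp (H.imp c a) x) (H.imp c a))) (H.pv_mp (H.pv_k (H.imp (H.imp c a) (H.imp (H.imp (H.imp c a) x) (H.imp c a))) (H.imp (H.imp (H.imp c x) (H.imp (H.imp (H.imp c a) x) x)) a)) (H.pv_k (H.imp c a) (H.imp (H.imp c a) x)))) (H.pv_mp (H.pv_mp (H.pv_s (H.imp (H.imp (H.imp c x) (H.imp (H.imp (H.imp c a) x) x)) a) (H.imp c (H.imp (H.imp c x) (H.imp (H.imp (H.imp c a) x) x))) (H.imp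 c a)) (H.pv_mp (H.pv_mp (H.pv_s (H.imp (H.imp (H.imp c x) (H.imp (H.imp (H.imp c a) x) x)) a) (H.imp c (H.imp (H.imp (H.imp c x) (H.imp (H.imp (H.imp c a) x) x)) a)) (H.imp (H.imp c (H.imp (H.imp c x) (H.imp (H.imp (H.imp c a) x) x))) (H.imp c a))) (H.pv_mp (H.pv_k (H.imp (H.imp c (H.imp (H.imp (H.imp c x) (H.imp (H.imp (H.imp c a) x) x)) a)) (H.imp (H.imp c (H.imp (H.imp c x) (H.imp (H.imp (H.imp c a) x) x))) (H.imp c a))) (H.imp (H.imp (H.imp c x) (H.imp (H.imp (H.imp c a) x) x)) a)) (H.pv_s c (H.imp (H.imp c x) (H.imp (H.imp (H.imp c a) x) x)) a))) (H.pv_k (H.imp (H.imp (H.imp c x) (H.imp (H.imp (H.imp c a) x) x)) a) c))) (H.pv_mp (H.pv_k (H.imp c (H.imp (H.imp c x) (H.imp (H.imp (H.imp c a) x) x))) (H.imp (H.imp (H.imp c x) (H.imp (H.imp (H.imp c a) x) x)) a)) (H.pv_mp (H.pv_mp (H.pv_s c (H.imp (H.imp c x) x) (H.imp (H.imp c x)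 (H.imp (H.imp (H.imp c a) x) x))) (H.pv_mp (H.pv_k (H.imp (H.imp (H.imp c x) x) (H.imp (H.imp c x) (H.imp (H.imp (H.imp c a) x) x))) c) (H.pv_mp (H.pv_s (H.imp c x) x (H.imp (H.imp (H.imp c a) x) x)) (H.pv_mp (H.pv_k (H.imp x (H.imp (H.imp (H.imp c a) x) x)) (H.imp c x)) (H.pv_k x (H.imp (H.imp c a) x)))))) (H.pv_mp (H.pv_mp (H.pv_s c (H.imp (H.imp c x) c) (H.imp (H.imp c x) x)) (H.pv_mp (H.pv_k (H.imp (H.imp (H.imp c x) c) (H.imp (H.imp c x) x)) c) (H.pv_mp (H.pv_s (H.imp c x) c x) (H.pv_i (H.imp c x))))) (H.pv_k c (H.imp c x))))))))))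

/-- `{x : c → x ∈ F}` is a filter whenever `F` is. -/
theorem deduction_filter (F : Set A) (hF : H.IsFilter F) (c : A) :
    H.IsFilter {x : A | H.imp c x ∈ F} := by
  constructor
  · show H.imp c H.one ∈ F
    rw [H.pv_imp_one c]
    exact hF.1
  · intro x y hx hy
    have hs : H.imp (H.imp c (H.imp x y)) (H.imp (H.imp c x) (H.imp c y)) ∈ F := by
      rw [H.S c x y]; exact hF.1
    have h1 : H.imp (H.imp c x) (H.imp c y) ∈ F := hF.2 _ _ hy hs
    exact hF.2 _ _ hx h1

end HilbertAlgebra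

/-- If `F₀` is meet prime, `F₀ ⊊ F₁`, and `a ∉ F₁`, then `F₁ ∩ G ⊄ F₀`,
where `G = { b : a ≤ b and b → a = a }`. -/
theorem hilbert_claim_not_subset {A : Type*} (H : HilbertAlgebra A)
    (F₀ F₁ : Set A) (a : A)
    (hF₀ : H.IsFilter F₀) (hF₀univ : F₀ ≠ Set.univ)
    (hprime : ∀ G K : Set A, H.IsFilter G → H.IsFilter K → G ∩ K ⊆ F₀ → G ⊆ F₀ ∨ K ⊆ F₀)
    (hF₁ : H.IsFilter F₁) (hsub : F₀ ⊂ F₁) (ha : a ∉ F₁) :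
    ¬ (F₁ ∩ {b : A | H.le a b ∧ H.imp b a = a} ⊆ F₀) := by
  intro hcon
  obtain ⟨c, hcF₁, hcF₀⟩ := Set.exists_of_ssubset hsub
  set P : Set A := {x : A | H.imp c x ∈ F₀} with hPdef
  set Q : Set A := {x : A | H.imp (H.imp c a) x ∈ F₀} with hQdef
  have hP : H.IsFilter P := H.deduction_filter F₀ hF₀ c
  have hQ : H.IsFilter Q := H.deduction_filter F₀ hF₀ (H.imp c a)
  have hPQ : P ∩ Q ⊆ F₀ := by
    intro x ⟨hxP, hxQ⟩
    set φ : A := H.imp (H.imp c x) (H.imp (H.imp (H.imp c a) x) x) with hφdef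
    have hφF₁ : φ ∈ F₁ := by
      refine hF₁.2 c φ hcF₁ ?_
      rw [show H.imp c φ = H.one from H.thmC c a x]
      exact hF₁.1
    have hφG : H.le a φ ∧ H.imp φ a = a := by
      refine ⟨H.thmA c a x, ?_⟩
      exact H.antisymm (H.imp φ a) a (H.thmB c a x) (H.K a φ)
    have hφF₀ : φ ∈ F₀ := hcon ⟨hφF₁, hφG⟩
    have h1 : H.imp (H.imp (H.imp c a) x) x ∈ F₀ := hF₀.2 _ _ hxP hφF₀
    exact hF₀.2 _ _ hxQ h1
  rcases hprime P Q hP hQ hPQ with h | h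
  · exact hcF₀ (h (by show H.imp c c ∈ F₀; rw [H.one_eq c]; exact hF₀.1))
  · have hca : H.imp c a ∈ F₀ :=
      h (by show H.imp (H.imp c a) (H.imp c a) ∈ F₀; rw [H.one_eq]; exact hF₀.1)
    exact ha (hF₁.2 c a hcF₁ (hsub.1 hca))
end

section
/- Let A be a Hilbert algebra, F₀ a meet irreducible implicative filter, and a, b ∈ A such that (a → b) → a ∈ F₀ and a ∉ F₀. Let F be the implicative filter generated by F₀ ∪ {a}. Then b ∉ F. -/
/-- If `F₀` is meet irreducible, `(a → b) → a ∈ F₀`, and `a ∉ F₀`, then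
`b ∉ Fg (F₀ ∪ {a})`. -/
theorem hilbert_claim_b_notin {A : Type*} (H : HilbertAlgebra A)
    (F₀ : Set A) (a b : A) (hF₀ : H.MeetIrred F₀)
    (h1 : H.imp (H.imp a b) a ∈ F₀) (h2 : a ∉ F₀) :
    b ∉ H.Fg (F₀ ∪ {a}) := by
  obtain ⟨⟨hone, hmp⟩, -, -⟩ := hF₀
  intro hb
  -- The set G = {x | a → x ∈ F₀} is a filter containing F₀ ∪ {a}.
  set G : Set A := {x | H.imp a x ∈ F₀} with hG
  have hGfilter : H.IsFilter G := by
    constructor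
    · show H.imp a H.one ∈ F₀
      rw [← H.one_eq a, H.K a a]
      exact hone
    · intro x y hx hxy
      have hS := H.S a x y
      have h3 : H.imp (H.imp a x) (H.imp a y) ∈ F₀ := by
        apply hmp _ _ hxy
        rw [hS]; exact hone
      exact hmp _ _ hx h3
  have hsub : (F₀ ∪ {a}) ⊆ G := by
    rintro x (hx | hx)
    · show H.imp a x ∈ F₀
      apply hmp x _ hx
      rw [H.K x a]; exact hone
    · rcases hx with rfl
      show H.imp x x ∈ F₀
      rw [H.one_eq]; exact hone
  have hbG : b ∈ G := hb G ⟨hGfilter, hsub⟩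
  exact h2 (hmp _ _ hbG h1)
end

section
/- Let A be a Hilbert algebra whose universe is a chain a₀ < a₁ < ⋯ < aₙ < 1 of n+2 elements with aᵢ → aⱼ = aⱼ whenever j < i and aᵢ → aⱼ = 1 whenever i ≤ j (and x → 1 = 1, 1 → x = x). Then dᵢ(a₀, …, aᵢ) = aᵢ for every i ≤ n; in particular A does not validate the identity dₙ ≈ 1. -/
/-- On a Hilbert algebra whose universe is a chain `a₀ < ⋯ < aₙ < 1` with the
indicated implication table, `dᵢ(a₀, …, aᵢ) = aᵢ` for all `i ≤ n`; in
particular the identity `dₙ ≈ 1` fails. -/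
theorem hilbert_chain_d_eval {A : Type*} (H : HilbertAlgebra A) (n : ℕ)
    (a : Fin (n + 1) → A)
    (huniv : ∀ x : A, (∃ i, x = a i) ∨ x = H.one)
    (hne_one : ∀ i, a i ≠ H.one)
    (hinj : ∀ i j : Fin (n + 1), i < j → a i ≠ a j)
    (himp_lt : ∀ i j : Fin (n + 1), j < i → H.imp (a i) (a j) = a j)
    (himp_le : ∀ i j : Fin (n + 1), i ≤ j → H.imp (a i) (a j) = H.one)
    (himp_one : ∀ x : A, H.imp x H.one = H.one)
    (hone_imp : ∀ x : A, H.imp H.one x = x) :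
    (∀ i : Fin (n + 1),
      H.d i (fun k : Fin (i + 1) => a (Fin.castLE (by omega) k)) = a i) ∧
    ¬ (∀ x : Fin (n + 1) → A, H.d n x = H.one) := by
  have key : ∀ m (hm : m ≤ n),
      H.d m (fun k : Fin (m + 1) => a (Fin.castLE (by omega) k)) = a ⟨m, by omega⟩ := by
    intro m
    induction m with
    | zero =>
      intro hm
      simp [HilbertAlgebra.d]
    | succ m ih =>
      intro hm
      have hm' : m ≤ n := by omega
      show H.imp (H.imp (H.imp _ (H.d m fun i => _)) _) _ = _
      have hfun : (fun i : Fin (m + 1) =>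
          a (Fin.castLE (by omega : m + 1 + 1 ≤ n + 1) i.castSucc)) =
          (fun k : Fin (m + 1) => a (Fin.castLE (by omega : m + 1 ≤ n + 1) k)) := by
        funext i
        rfl
      rw [hfun, ih hm']
      have hlast : a (Fin.castLE (by omega : m + 1 + 1 ≤ n + 1) (Fin.last (m + 1)))
          = a ⟨m + 1, by omega⟩ := by
        congr 1
      beta_reduce
      rw [hlast]
      rw [himp_lt ⟨m + 1, by omega⟩ ⟨m, by omega⟩ (by simp),
        himp_le ⟨m, by omega⟩ ⟨m + 1, by omega⟩ (by simp),
        hone_imp]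
  constructor
  · intro i
    have := key i.val (by omega)
    simpa using this
  · intro h
    have := h (fun k => a (Fin.castLE (le_refl _) k))
    have h2 := key n (le_refl n)
    rw [this] at h2
    exact hne_one _ h2.symm
end
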